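/- Local shape derivative under a Neumann boundary condition: let Γ = φ⁻¹(0) be a compact C² hypersurface in ℝ^d with unit normal n = ∇φ/|∇φ|, let V ∈ C_c²(ℝ^d;ℝ^d) satisfy V = (V·n)n on Γ, and let N(t,·) be a C¹ family of unit vector fields on a neighborhood of Γ with N(0,·)|_Γ = n, ‖N(t,x)‖ = 1, whose material derivative satisfies d/dt N(t,T_t(x))|_{t=0} = −∇_Γ(V·n)(x) on Γ. Let w : (−δ,δ)×ℝ^d → ℝ be C² jointly, let w_N : ℝ^d → ℝ be C¹ (independent of t), and suppose ∇w(t,·)·N(t,·) = w_N holds at T_t(x) for all x ∈ Γ and small t. Then the local shape derivative w' := ∂_t w(0,·) satisfies, on Γ, ∂w'/∂n = (V·n)[ ∂w_N/∂n − ∂²w/∂n² ] + ∇_Γ w · ∇_Γ(V·n), where ∂²w/∂n² = (D²w n)·n and w = w(0,·). -/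

import Mathlib

/-!
Differentiate the boundary relation `⟪∇w(t, T_t x), N(t, T_t x)⟫ = w_N(T_t x)` at `t = 0`. Writing
`S` for the joint Hessian of `(t, y) ↦ w(t, y)` at `(0, x)`, this gives
`S (1, V) (0, n) - ⟪∇w, ∇_Γ(V·n)⟫ - ⟪∇w_N, V⟫ = 0`. As `V = (V·n) n` on `Γ`, the Hessian term
splits into the mixed derivative `S (1, 0) (0, n) = ∂w'/∂n` (symmetry of `S`) plus
`(V·n) ∂²w/∂n²`, and since `∇_Γ(V·n) ⊥ n`, `∇w` may be replaced by `∇_Γ w`.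
-/

open MeasureTheory RealInnerProductSpace

noncomputable section

/-- The divergence of a vector field on `ℝ^d`. -/
def divg {d : ℕ} (W : EuclideanSpace ℝ (Fin d) → EuclideanSpace ℝ (Fin d))
    (x : EuclideanSpace ℝ (Fin d)) : ℝ :=
  ∑ i, fderiv ℝ W x (EuclideanSpace.single i 1) i

/-- The unit normal field `∇φ/|∇φ|` of the level set of `φ`. -/
def nrm {d : ℕ} (φ : EuclideanSpace ℝ (Fin d) → ℝ) (x : EuclideanSpace ℝ (Fin d)) :
    EuclideanSpace ℝ (Fin d) :=
  ‖gradient φ x‖⁻¹ • gradient φ x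

/-- The tangential gradient `∇_Γ f = ∇f − (∇f·n)n` relative to a normal field `n`. -/
def tgrad {d : ℕ} (n : EuclideanSpace ℝ (Fin d) → EuclideanSpace ℝ (Fin d))
    (f : EuclideanSpace ℝ (Fin d) → ℝ) (x : EuclideanSpace ℝ (Fin d)) :
    EuclideanSpace ℝ (Fin d) :=
  gradient f x - ⟪gradient f x, n x⟫ • n x

/-- The tangential divergence `div_Γ W = div W − (DW n)·n` relative to a normal field `n`. -/
def tdiv {d : ℕ} (n W : EuclideanSpace ℝ (Fin d) → EuclideanSpace ℝ (Fin d))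
    (x : EuclideanSpace ℝ (Fin d)) : ℝ :=
  divg W x - ⟪fderiv ℝ W x (n x), n x⟫

/-- The additive curvature `K = div_Γ n`. -/
def addK {d : ℕ} (n : EuclideanSpace ℝ (Fin d) → EuclideanSpace ℝ (Fin d))
    (x : EuclideanSpace ℝ (Fin d)) : ℝ :=
  tdiv n n x


open Filter Topology Function ContinuousLinearMap

section Smooth

variable {𝕜 X Y : Type*} [NontriviallyNormedField 𝕜] [NormedAddCommGroup X] [NormedSpace 𝕜 X]
  [NormedAddCommGroup Y] [NormedSpace 𝕜 Y] {f : X → Y} {x : X}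

theorem ContDiffAt.eventually_differentiableAt {n : WithTop ℕ∞} (h : ContDiffAt 𝕜 n f x)
    (hn : 1 ≤ n) : ∀ᶠ y in 𝓝 x, DifferentiableAt 𝕜 f y :=
  ((h.of_le hn).eventually (by simp)).mono fun _ hy => hy.differentiableAt one_ne_zero

theorem ContDiffAt.hasFDerivAt_fderiv (h : ContDiffAt 𝕜 2 f x) :
    HasFDerivAt (fderiv 𝕜 f) (fderiv 𝕜 (fderiv 𝕜 f) x) x :=
  ((h.fderiv_right (m := 1) (by norm_num)).differentiableAt one_ne_zero).hasFDerivAt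

end Smooth

section Slices

variable {E F : Type*} [NormedAddCommGroup E] [NormedSpace ℝ E] [NormedAddCommGroup F]
  [NormedSpace ℝ F] {w : ℝ → E → F} {t : ℝ} {x : E}

theorem DifferentiableAt.hasFDerivAt_uncurry_right (h : DifferentiableAt ℝ (uncurry w) (t, x)) :
    HasFDerivAt (w t) ((fderiv ℝ (uncurry w) (t, x)).comp (inr ℝ ℝ E)) x :=
  h.hasFDerivAt.comp x (hasFDerivAt_prodMk_right t x)

theorem DifferentiableAt.hasDerivAt_uncurry_left (h : DifferentiableAt ℝ (uncurry w) (t, x)) :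
    HasDerivAt (fun s => w s x) (fderiv ℝ (uncurry w) (t, x) (1, 0)) t :=
  h.hasFDerivAt.comp_hasDerivAt (f := fun s : ℝ => (s, x)) t
    ((hasDerivAt_id t).prodMk (hasDerivAt_const t x))

theorem ContDiffAt.eventually_differentiableAt_uncurry (h : ContDiffAt ℝ 2 (uncurry w) (t, x)) :
    ∀ᶠ y in 𝓝 x, DifferentiableAt ℝ (uncurry w) (t, y) :=
  (continuousAt_const.prodMk continuousAt_id).eventually
    (h.eventually_differentiableAt (by norm_num))

theorem ContDiffAt.hasFDerivAt_fderiv_uncurry_right (h : ContDiffAt ℝ 2 (uncurry w) (t, x)) :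
    HasFDerivAt (fun y => fderiv ℝ (uncurry w) (t, y))
      ((fderiv ℝ (fderiv ℝ (uncurry w)) (t, x)).comp (inr ℝ ℝ E)) x :=
  h.hasFDerivAt_fderiv.comp x (hasFDerivAt_prodMk_right t x)

theorem ContDiffAt.fderiv_deriv_uncurry_left (h : ContDiffAt ℝ 2 (uncurry w) (t, x)) (u : E) :
    fderiv ℝ (fun y => deriv (fun s => w s y) t) x u
      = fderiv ℝ (fderiv ℝ (uncurry w)) (t, x) (1, 0) (0, u) := by
  have hdt : (fun y => deriv (fun s => w s y) t) =ᶠ[𝓝 x]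
      fun y => fderiv ℝ (uncurry w) (t, y) (1, 0) :=
    h.eventually_differentiableAt_uncurry.mono fun _ hy => hy.hasDerivAt_uncurry_left.deriv
  rw [hdt.fderiv_eq, (h.hasFDerivAt_fderiv_uncurry_right.clm_apply (hasFDerivAt_const _ x)).fderiv,
    h.isSymmSndFDerivAt (by simp)]
  simp

theorem ContDiffAt.fderiv_fderiv_uncurry_right (h : ContDiffAt ℝ 2 (uncurry w) (t, x))
    (u v : E) :
    fderiv ℝ (fderiv ℝ (w t)) x u v
      = fderiv ℝ (fderiv ℝ (uncurry w)) (t, x) (0, u) (0, v) := by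
  have hdx : fderiv ℝ (w t) =ᶠ[𝓝 x] fun y => (fderiv ℝ (uncurry w) (t, y)).comp (inr ℝ ℝ E) :=
    h.eventually_differentiableAt_uncurry.mono fun _ hy => hy.hasFDerivAt_uncurry_right.fderiv
  rw [hdx.fderiv_eq, (h.hasFDerivAt_fderiv_uncurry_right.clm_comp (hasFDerivAt_const _ x)).fderiv]
  simp

end Slices

section Gradient

variable {E : Type*} [NormedAddCommGroup E] [InnerProductSpace ℝ E] [CompleteSpace E]

theorem inner_fderiv_gradient (f : E → ℝ) (x u v : E) :
    ⟪fderiv ℝ (gradient f) x u, v⟫ = fderiv ℝ (fderiv ℝ f) x u v := by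
  have : gradient f = (InnerProductSpace.toDual ℝ E).symm.toContinuousLinearEquiv ∘ fderiv ℝ f :=
    rfl
  rw [this, ContinuousLinearEquiv.comp_fderiv]
  exact InnerProductSpace.toDual_symm_apply

theorem hasDerivAt_inner_gradient_uncurry {w : ℝ → E → ℝ} {γ ν : ℝ → E} {γ' ν' : E} {t : ℝ}
    (h : ContDiffAt ℝ 2 (uncurry w) (t, γ t)) (hγ : HasDerivAt γ γ' t) (hν : HasDerivAt ν ν' t) :
    HasDerivAt (fun s => ⟪gradient (w s) (γ s), ν s⟫)
      (fderiv ℝ (fderiv ℝ (uncurry w)) (t, γ t) (1, γ') (0, ν t)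
        + ⟪gradient (w t) (γ t), ν'⟫) t := by
  have hp : HasDerivAt (fun s : ℝ => ((s, γ s) : ℝ × E)) ((1 : ℝ), γ') t :=
    (hasDerivAt_id t).prodMk hγ
  have hinner : ∀ s, DifferentiableAt ℝ (uncurry w) (s, γ s) → ∀ v,
      ⟪gradient (w s) (γ s), v⟫ = fderiv ℝ (uncurry w) (s, γ s) (0, v) := fun s hs v => by
    rw [inner_gradient_left, hs.hasFDerivAt_uncurry_right.fderiv]; rfl
  have hev : (fun s => ⟪gradient (w s) (γ s), ν s⟫) =ᶠ[𝓝 t]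
      fun s => fderiv ℝ (uncurry w) (s, γ s) (0, ν s) :=
    (hp.continuousAt.eventually (h.eventually_differentiableAt (by norm_num))).mono
      fun s hs => hinner s hs (ν s)
  rw [hinner t (h.differentiableAt (by norm_num))]
  have hW := HasFDerivAt.comp_hasDerivAt (l := fderiv ℝ (uncurry w)) t h.hasFDerivAt_fderiv hp
  exact (hW.clm_apply ((hasDerivAt_const t (0 : ℝ)).prodMk hν)).congr_of_eventuallyEq hev

end Gradient

section Tangential

variable {d : ℕ}

theorem norm_nrm {φ : EuclideanSpace ℝ (Fin d) → ℝ} {x : EuclideanSpace ℝ (Fin d)}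
    (hx : gradient φ x ≠ 0) : ‖nrm φ x‖ = 1 := by
  rw [nrm, norm_smul, norm_inv, norm_norm, inv_mul_cancel₀ (norm_ne_zero_iff.mpr hx)]

variable {n : EuclideanSpace ℝ (Fin d) → EuclideanSpace ℝ (Fin d)} {x : EuclideanSpace ℝ (Fin d)}

theorem inner_tgrad_left_of_norm_eq_one (hn : ‖n x‖ = 1) (f : EuclideanSpace ℝ (Fin d) → ℝ) :
    ⟪tgrad n f x, n x⟫ = 0 := by
  rw [tgrad, inner_sub_left, real_inner_smul_left, real_inner_self_eq_norm_sq, hn]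
  ring

theorem inner_tgrad_tgrad_of_norm_eq_one (hn : ‖n x‖ = 1) (f g : EuclideanSpace ℝ (Fin d) → ℝ) :
    ⟪tgrad n f x, tgrad n g x⟫ = ⟪gradient f x, tgrad n g x⟫ := by
  rw [tgrad, inner_sub_left, real_inner_smul_left, real_inner_comm (tgrad n g x) (n x),
    inner_tgrad_left_of_norm_eq_one hn, mul_zero, sub_zero]

end Tangential

theorem stmt_7_general {d : ℕ} (φ : EuclideanSpace ℝ (Fin d) → ℝ)
    (hgrad : ∀ x ∈ φ ⁻¹' {0}, gradient φ x ≠ 0)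
    (V : EuclideanSpace ℝ (Fin d) → EuclideanSpace ℝ (Fin d))
    (hVn : ∀ x ∈ φ ⁻¹' {0}, V x = ⟪V x, nrm φ x⟫ • nrm φ x)
    (δ : ℝ) (hδ : 0 < δ)
    (N : ℝ → EuclideanSpace ℝ (Fin d) → EuclideanSpace ℝ (Fin d))
    (hN0 : ∀ x ∈ φ ⁻¹' {0}, N 0 x = nrm φ x)
    (hNmat : ∀ x ∈ φ ⁻¹' {0},
      HasDerivAt (fun t => N t (x + t • V x))
        (-(tgrad (nrm φ) (fun y => ⟪V y, nrm φ y⟫) x)) 0)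
    (w : ℝ → EuclideanSpace ℝ (Fin d) → ℝ)
    (hw : ContDiffOn ℝ 2 (fun q : ℝ × EuclideanSpace ℝ (Fin d) => w q.1 q.2)
      (Set.Ioo (-δ) δ ×ˢ Set.univ))
    (wN : EuclideanSpace ℝ (Fin d) → ℝ) (hwN : ContDiff ℝ 1 wN)
    (hbc : ∀ x ∈ φ ⁻¹' {0}, ∀ t ∈ Set.Ioo (-δ) δ,
      ⟪gradient (w t) (x + t • V x), N t (x + t • V x)⟫ = wN (x + t • V x)) :
    ∀ x ∈ φ ⁻¹' {0},
      ⟪gradient (fun y => deriv (fun t => w t y) 0) x, nrm φ x⟫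
        = ⟪V x, nrm φ x⟫ *
            (⟪gradient wN x, nrm φ x⟫
              - ⟪fderiv ℝ (fun y => gradient (w 0) y) x (nrm φ x), nrm φ x⟫)
          + ⟪tgrad (nrm φ) (w 0) x, tgrad (nrm φ) (fun y => ⟪V y, nrm φ y⟫) x⟫ := by
  intro x hx
  set n := nrm φ x
  set c := ⟪V x, n⟫
  set T := tgrad (nrm φ) (fun y => ⟪V y, nrm φ y⟫) x
  set S := fderiv ℝ (fderiv ℝ (uncurry w)) (0, x)
  have hVx : V x = c • n := hVn x hx
  have hw0 : ContDiffAt ℝ 2 (uncurry w) (0, x) :=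
    hw.contDiffAt (prod_mem_nhds (Ioo_mem_nhds (neg_lt_zero.mpr hδ) hδ) univ_mem)
  have hγ : HasDerivAt (fun t : ℝ => x + t • V x) (V x) 0 := by
    simpa using ((hasDerivAt_id (0 : ℝ)).smul_const (V x)).const_add x
  -- the boundary condition, differentiated along `t ↦ T_t x`
  have hbc' : S (1, V x) (0, n) - ⟪gradient (w 0) x, T⟫ - fderiv ℝ wN x (V x) = 0 := by
    have hderiv := (hasDerivAt_inner_gradient_uncurry (by simpa using hw0) hγ (hNmat x hx)).sub
      ((hwN.differentiable one_ne_zero _).hasFDerivAt.comp_hasDerivAt 0 hγ)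
    have hconst := hderiv.unique ((hasDerivAt_const (0 : ℝ) (0 : ℝ)).congr_of_eventuallyEq
      (by
        filter_upwards [Ioo_mem_nhds (neg_lt_zero.mpr hδ) hδ] with t ht
        simp only [Pi.sub_apply, comp_apply, hbc x hx t ht, sub_self]))
    simp only [zero_smul, add_zero, hN0 x hx, inner_neg_right, ← sub_eq_add_neg] at hconst
    exact hconst
  have hsplit : S (1, c • n) (0, n) = S (1, 0) (0, n) + c * S (0, n) (0, n) := by
    rw [show ((1 : ℝ), c • n) = (1, 0) + c • (0, n) by simp, map_add, map_smul]
    rfl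
  rw [hVx, map_smul, smul_eq_mul, ← inner_gradient_left, hsplit] at hbc'
  rw [inner_gradient_left, hw0.fderiv_deriv_uncurry_left, inner_fderiv_gradient,
    hw0.fderiv_fderiv_uncurry_right, inner_tgrad_tgrad_of_norm_eq_one (norm_nrm (hgrad x hx))]
  linarith

/-- local shape derivative under a Neumann boundary condition.
Let `Γ = φ⁻¹(0)` be a compact `C²` hypersurface with unit normal `n = ∇φ/|∇φ|`,
`V ∈ C_c²` with `V = (V·n)n` on `Γ`, and `N(t,·)` a `C¹` family of unit vector fields near `Γ`
with `N(0,·) = n` on `Γ`, whose material derivative is `−∇_Γ(V·n)` on `Γ`. Let `w` be a jointly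
`C²` family and `w_N` a `C¹` function with `∇w(t,·)·N(t,·) = w_N` at `T_t(x)` for `x ∈ Γ` and
small `t`. Then on `Γ`:
`∂w'/∂n = (V·n)(∂w_N/∂n − ∂²w/∂n²) + ∇_Γ w·∇_Γ(V·n)`, with `w = w(0,·)`. -/
theorem stmt_7 {d : ℕ} (φ : EuclideanSpace ℝ (Fin d) → ℝ) (hφ : ContDiff ℝ 2 φ)
    (hcpt : IsCompact (φ ⁻¹' {0}))
    (hgrad : ∀ x ∈ φ ⁻¹' {0}, gradient φ x ≠ 0)
    (V : EuclideanSpace ℝ (Fin d) → EuclideanSpace ℝ (Fin d))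
    (hV : ContDiff ℝ 2 V) (hVc : HasCompactSupport V)
    (hVn : ∀ x ∈ φ ⁻¹' {0}, V x = ⟪V x, nrm φ x⟫ • nrm φ x)
    (δ : ℝ) (hδ : 0 < δ)
    (U : Set (EuclideanSpace ℝ (Fin d))) (hU : IsOpen U) (hΓU : φ ⁻¹' {0} ⊆ U)
    (N : ℝ → EuclideanSpace ℝ (Fin d) → EuclideanSpace ℝ (Fin d))
    (hN : ContDiffOn ℝ 1 (fun q : ℝ × EuclideanSpace ℝ (Fin d) => N q.1 q.2)
      (Set.Ioo (-δ) δ ×ˢ U))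
    (hN0 : ∀ x ∈ φ ⁻¹' {0}, N 0 x = nrm φ x)
    (hNunit : ∀ t ∈ Set.Ioo (-δ) δ, ∀ x ∈ U, ‖N t x‖ = 1)
    (hNmat : ∀ x ∈ φ ⁻¹' {0},
      HasDerivAt (fun t => N t (x + t • V x))
        (-(tgrad (nrm φ) (fun y => ⟪V y, nrm φ y⟫) x)) 0)
    (w : ℝ → EuclideanSpace ℝ (Fin d) → ℝ)
    (hw : ContDiffOn ℝ 2 (fun q : ℝ × EuclideanSpace ℝ (Fin d) => w q.1 q.2)
      (Set.Ioo (-δ) δ ×ˢ Set.univ))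
    (wN : EuclideanSpace ℝ (Fin d) → ℝ) (hwN : ContDiff ℝ 1 wN)
    (hbc : ∀ x ∈ φ ⁻¹' {0}, ∀ t ∈ Set.Ioo (-δ) δ,
      ⟪gradient (w t) (x + t • V x), N t (x + t • V x)⟫ = wN (x + t • V x)) :
    ∀ x ∈ φ ⁻¹' {0},
      ⟪gradient (fun y => deriv (fun t => w t y) 0) x, nrm φ x⟫
        = ⟪V x, nrm φ x⟫ *
            (⟪gradient wN x, nrm φ x⟫
              - ⟪fderiv ℝ (fun y => gradient (w 0) y) x (nrm φ x), nrm φ x⟫)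
          + ⟪tgrad (nrm φ) (w 0) x, tgrad (nrm φ) (fun y => ⟪V y, nrm φ y⟫) x⟫ :=
  stmt_7_general φ hgrad V hVn δ hδ N hN0 hNmat w hw wN hwN hbc

end
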